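/- Let n ≥ 1 and let S be an invertible n×n real matrix. Define φ on vectors v ∈ ℝⁿ with strictly positive entries by φ(v) = diag-part of (diag(v)^{1/2} (SᵀS) diag(v)^{1/2})^{1/2}, i.e., the vector of diagonal entries of the positive-semidefinite square root of diag(v)^{1/2}(SᵀS)diag(v)^{1/2}. Then an n×n real symmetric positive-definite matrix X with all diagonal entries at most 1 satisfies tr(SᵀS X⁻¹) ≤ tr(SᵀS Y⁻¹) for every symmetric positive-definite Y with diagonal entries at most 1 IF AND ONLY IF there exists λ ∈ ℝⁿ with strictly positive entries such that φ(λ) = λ and X = diag(λ)^{−1/2} (diag(λ)^{1/2}(SᵀS)diag(λ)^{1/2})^{1/2} diag(λ)^{−1/2}. -/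

import Mathlib

/-!
With `A = SᵀS`, the objective `g Y = tr (A Y⁻¹)` is convex on positive-definite matrices: expanding
`Z⁻¹` to second order around `X` gives the tangent inequality
`g X ≤ g Z + tr (X⁻¹ A X⁻¹ (Z - X))`, the remainder being the trace of a product of two positive
semidefinite matrices. So `X` minimizes `g` over the convex feasible set exactly when
`tr (M (Y - X)) ≤ 0` for all feasible `Y`, where `M = X⁻¹ A X⁻¹`; for necessity, apply the tangent
inequality at the points of the segment from `X` to `Y` and let them tend to `X`. Raising one
diagonal entry of `X`, or perturbing `X` by `±ε (Eᵢⱼ + Eⱼᵢ)`, shows that this variational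
inequality says exactly that `diag X = 1` and `M = diag λ` is diagonal. Then
`R = diag(λ)^{1/2} X diag(λ)^{1/2}` is the positive semidefinite square root of
`diag(λ)^{1/2} A diag(λ)^{1/2}` and has diagonal `λ`, and conversely.
-/

open Matrix Filter Topology
open scoped MatrixOrder

namespace Matrix

def posDefDiagLeOne (ι : Type*) [Fintype ι] : Set (Matrix ι ι ℝ) :=
  {Y | Y.PosDef ∧ ∀ i, Y i i ≤ 1}

variable {ι : Type*} [Fintype ι]

lemma convex_posDefDiagLeOne : Convex ℝ (posDefDiagLeOne ι) := by
  rintro X ⟨hX, hXd⟩ Y ⟨hY, hYd⟩ a b ha hb hab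
  refine ⟨?_, fun i ↦ ?_⟩
  · rcases ha.eq_or_lt with rfl | ha
    · simpa [show b = 1 by linarith] using hY
    · exact (hX.smul ha).add_posSemidef (hY.posSemidef.smul hb)
  · simp only [add_apply, smul_apply, smul_eq_mul]
    nlinarith [hXd i, hYd i]

lemma abs_dotProduct_mulVec_le (P : Matrix ι ι ℝ) (v : ι → ℝ) :
    |v ⬝ᵥ P *ᵥ v| ≤ (∑ i, ∑ j, |P i j|) * (v ⬝ᵥ v) := by
  have hcoord : ∀ i j, |v i * v j| ≤ v ⬝ᵥ v := fun i j ↦ by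
    have hsq : ∀ k, v k ^ 2 ≤ v ⬝ᵥ v := fun k ↦ by
      simpa [dotProduct, sq] using
        Finset.single_le_sum (fun l _ ↦ mul_self_nonneg (v l)) (Finset.mem_univ k)
    rw [abs_le]
    constructor <;> nlinarith [hsq i, hsq j, sq_nonneg (v i + v j), sq_nonneg (v i - v j)]
  calc |v ⬝ᵥ P *ᵥ v| ≤ ∑ i, ∑ j, |P i j| * |v i * v j| := by
        simp only [dotProduct, mulVec, Finset.mul_sum]
        refine (Finset.abs_sum_le_sum_abs _ _).trans (Finset.sum_le_sum fun i _ ↦ ?_)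
        refine (Finset.abs_sum_le_sum_abs _ _).trans (le_of_eq (Finset.sum_congr rfl fun j _ ↦ ?_))
        rw [← abs_mul]; ring_nf
    _ ≤ ∑ i, ∑ j, |P i j| * (v ⬝ᵥ v) := by gcongr with i _ j _; exact hcoord i j
    _ = _ := by simp only [Finset.sum_mul]

section DecidableEq

variable [DecidableEq ι]

lemma PosSemidef.trace_mul_nonneg {A B : Matrix ι ι ℝ} (hA : A.PosSemidef)
    (hB : B.PosSemidef) : 0 ≤ (A * B).trace := by
  obtain ⟨C, rfl⟩ := CStarAlgebra.nonneg_iff_eq_star_mul_self.mp hB.nonneg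
  rw [star_eq_conjTranspose, ← Matrix.mul_assoc, trace_mul_cycle]
  exact (hA.mul_mul_conjTranspose_same C).trace_nonneg

lemma inv_eq_inv_sub_add {X Z : Matrix ι ι ℝ} (hX : IsUnit X) (hZ : IsUnit Z) :
    Z⁻¹ = X⁻¹ - X⁻¹ * (Z - X) * X⁻¹ + X⁻¹ * (Z - X) * Z⁻¹ * (Z - X) * X⁻¹ := by
  have h₁ : X⁻¹ - Z⁻¹ = X⁻¹ * (Z - X) * Z⁻¹ := inv_sub_inv (iff_of_true hX hZ)
  have h₂ : X⁻¹ - Z⁻¹ = Z⁻¹ * (Z - X) * X⁻¹ := by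
    rw [← neg_sub, inv_sub_inv (iff_of_true hZ hX)]; noncomm_ring
  rw [show X⁻¹ * (Z - X) * Z⁻¹ * (Z - X) * X⁻¹ = X⁻¹ * (Z - X) * (Z⁻¹ * (Z - X) * X⁻¹) by
    noncomm_ring, ← h₂, Matrix.mul_sub (X⁻¹ * (Z - X)), ← h₁]
  abel

lemma PosDef.inv_mul_mul_inv {A X : Matrix ι ι ℝ} (hA : A.PosDef) (hX : X.PosDef) :
    (X⁻¹ * A * X⁻¹).PosDef := by
  simpa [transpose_nonsing_inv, (isHermitian_iff_isSymm.mp hX.1).eq] using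
    hA.conjTranspose_mul_mul_same (mulVec_injective_iff_isUnit.2 hX.inv.isUnit)

lemma PosSemidef.inv_mul_mul_inv {A X : Matrix ι ι ℝ} (hA : A.PosSemidef) (hX : X.PosDef) :
    (X⁻¹ * A * X⁻¹).PosSemidef := by
  simpa [transpose_nonsing_inv, (isHermitian_iff_isSymm.mp hX.1).eq] using
    hA.conjTranspose_mul_mul_same X⁻¹

lemma trace_mul_inv_le_add {A X Z : Matrix ι ι ℝ} (hA : A.PosSemidef) (hX : X.PosDef)
    (hZ : Z.PosDef) :
    (A * X⁻¹).trace ≤ (A * Z⁻¹).trace + (X⁻¹ * A * X⁻¹ * (Z - X)).trace := by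
  set M := X⁻¹ * A * X⁻¹
  set E := Z - X
  have hE : Eᵀ = E := by
    simp [E, (isHermitian_iff_isSymm.mp hX.1).eq, (isHermitian_iff_isSymm.mp hZ.1).eq]
  have hrem : 0 ≤ (E * M * E * Z⁻¹).trace := by
    refine PosSemidef.trace_mul_nonneg ?_ hZ.inv.posSemidef
    simpa [hE] using (hA.inv_mul_mul_inv hX).conjTranspose_mul_mul_same E
  have hexp : (A * Z⁻¹).trace = (A * X⁻¹).trace - (M * E).trace + (E * M * E * Z⁻¹).trace := by
    have h₁ : (A * (X⁻¹ * E * X⁻¹)).trace = (M * E).trace := by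
      rw [show A * (X⁻¹ * E * X⁻¹) = A * X⁻¹ * E * X⁻¹ by noncomm_ring, trace_mul_comm]
      simp only [M, Matrix.mul_assoc]
    have h₂ : (A * (X⁻¹ * E * Z⁻¹ * E * X⁻¹)).trace = (E * M * E * Z⁻¹).trace := by
      rw [show A * (X⁻¹ * E * Z⁻¹ * E * X⁻¹) = A * X⁻¹ * E * Z⁻¹ * (E * X⁻¹) by noncomm_ring,
        trace_mul_comm]
      simp only [M, Matrix.mul_assoc]
    conv_lhs => rw [inv_eq_inv_sub_add hX.isUnit hZ.isUnit]
    rw [Matrix.mul_add, Matrix.mul_sub, trace_add, trace_sub, h₁, h₂]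
  linarith

lemma trace_inv_mul_mul_inv_mul_sub_nonpos_of_isMinOn {A X Y : Matrix ι ι ℝ}
    {K : Set (Matrix ι ι ℝ)} (hA : A.PosSemidef) (hK : Convex ℝ K) (hKpd : ∀ Z ∈ K, Z.PosDef)
    (hX : X ∈ K) (hY : Y ∈ K) (hmin : IsMinOn (fun Z ↦ (A * Z⁻¹).trace) K X) :
    (X⁻¹ * A * X⁻¹ * (Y - X)).trace ≤ 0 := by
  set H := Y - X
  set grad : ℝ → ℝ := fun t ↦ ((X + t • H)⁻¹ * A * (X + t • H)⁻¹ * H).trace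
  have hgrad : ∀ t ∈ Set.Ioc (0 : ℝ) 1, grad t ≤ 0 := by
    intro t ht
    have hXt : X + t • H ∈ K := hK.add_smul_sub_mem hX hY ⟨ht.1.le, ht.2⟩
    have h := trace_mul_inv_le_add hA (hKpd _ hXt) (hKpd X hX)
    rw [show X - (X + t • H) = -(t • H) by abel, Matrix.mul_neg, trace_neg, Matrix.mul_smul,
      trace_smul, smul_eq_mul] at h
    exact nonpos_of_mul_nonpos_right (by linarith [isMinOn_iff.1 hmin _ hXt]) ht.1
  have hcont : ContinuousAt grad 0 := by
    have hinv : ContinuousAt Inv.inv X :=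
      continuousAt_matrix_inv X (by
        simpa only [Ring.inverse_eq_inv'] using continuousAt_inv₀ (hKpd X hX).det_pos.ne')
    have hF : Continuous fun W : Matrix ι ι ℝ ↦ (W * A * W * H).trace :=
      (((continuous_id.matrix_mul continuous_const).matrix_mul continuous_id).matrix_mul
        continuous_const).matrix_trace
    exact hF.continuousAt.comp (hinv.comp_of_eq (by fun_prop) (by simp))
  have hgrad₀ : grad 0 = (X⁻¹ * A * X⁻¹ * H).trace := by simp [grad]
  rw [← hgrad₀]
  refine le_of_tendsto (hcont.tendsto.mono_left (nhdsWithin_le_nhds (s := Set.Ioi 0))) ?_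
  filter_upwards [Ioc_mem_nhdsGT zero_lt_one] using hgrad

lemma PosDef.eventually_posDef_add_smul {X P : Matrix ι ι ℝ} (hX : X.PosDef)
    (hP : P.IsHermitian) : ∀ᶠ s in 𝓝 (0 : ℝ), (X + s • P).PosDef := by
  cases isEmpty_or_nonempty ι
  · exact .of_forall fun s ↦ by simpa only [Subsingleton.elim (X + s • P) X] using hX
  obtain ⟨r, hr, hrX⟩ := (CFC.exists_pos_algebraMap_le_iff hX.1).2 fun x hx ↦
    hX.isStrictlyPositive.spectrum_pos hx
  set c := ∑ i, ∑ j, |P i j|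
  refine Metric.eventually_nhds_iff.2 ⟨r / (c + 1), by positivity, fun s hs ↦ ?_⟩
  rw [Real.dist_eq, sub_zero] at hs
  refine PosDef.of_dotProduct_mulVec_pos (hX.1.add (hP.smul (.all s))) fun v hv ↦ ?_
  have hXv : r * (v ⬝ᵥ v) ≤ v ⬝ᵥ X *ᵥ v := by
    have := (Matrix.le_iff.1 hrX).dotProduct_mulVec_nonneg v
    simpa [Algebra.algebraMap_eq_smul_one, sub_mulVec, smul_mulVec, dotProduct_sub, sub_nonneg]
      using this
  have hvv : 0 < v ⬝ᵥ v := by simpa using dotProduct_star_self_pos_iff.2 hv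
  have hPv := abs_dotProduct_mulVec_le P v
  have hsc : |s| * c < r := by
    rw [lt_div_iff₀ (by positivity)] at hs
    nlinarith [abs_nonneg s]
  simp only [star_trivial, add_mulVec, smul_mulVec, dotProduct_add, dotProduct_smul, smul_eq_mul]
  nlinarith [abs_le.1 hPv, abs_nonneg s, le_abs_self s, neg_abs_le s]

lemma diag_eq_one_of_forall_trace_mul_sub_nonpos {M X : Matrix ι ι ℝ} (hM : ∀ j, 0 < M j j)
    (hX : X ∈ posDefDiagLeOne ι)
    (hstat : ∀ Y ∈ posDefDiagLeOne ι, (M * (Y - X)).trace ≤ 0) (j : ι) : X j j = 1 := by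
  have hc : 0 ≤ 1 - X j j := sub_nonneg.2 (hX.2 j)
  have hY : X + single j j (1 - X j j) ∈ posDefDiagLeOne ι := by
    refine ⟨hX.1.add_posSemidef ?_, fun i ↦ ?_⟩
    · rw [← diagonal_single]
      exact .diagonal (Pi.single_nonneg.2 hc)
    · rcases eq_or_ne i j with rfl | hij
      · simp
      · simpa [single_apply, hij.symm] using hX.2 i
  have h := hstat _ hY
  rw [add_sub_cancel_left, trace_mul_single] at h
  simp only [MulOpposite.smul_eq_mul_unop, MulOpposite.unop_op] at h
  nlinarith [hM j, hX.2 j]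

lemma eq_zero_of_forall_trace_mul_sub_nonpos {M X : Matrix ι ι ℝ} (hM : M.IsSymm)
    (hX : X ∈ posDefDiagLeOne ι)
    (hstat : ∀ Y ∈ posDefDiagLeOne ι, (M * (Y - X)).trace ≤ 0) {i j : ι} (hij : i ≠ j) :
    M i j = 0 := by
  set P := single i j (1 : ℝ) + single j i 1
  have hP : P.IsHermitian := by
    simp only [isHermitian_iff_isSymm, IsSymm, P, transpose_add, transpose_single, add_comm]
  have hPdiag : ∀ k, P k k = 0 := fun k ↦ by
    have h₁ : ¬(i = k ∧ j = k) := fun h ↦ hij (h.1.trans h.2.symm)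
    have h₂ : ¬(j = k ∧ i = k) := fun h ↦ hij (h.2.trans h.1.symm)
    simp [P, h₁, h₂]
  have htr : ∀ s : ℝ, (M * (X + s • P - X)).trace = 2 * s * M i j := fun s ↦ by
    rw [add_sub_cancel_left, Matrix.mul_smul, trace_smul, Matrix.mul_add, trace_add,
      trace_mul_single, trace_mul_single, hM.apply i j]
    simp only [MulOpposite.op_one, one_smul, smul_eq_mul]
    ring
  have hfeas : ∀ s : ℝ, (X + s • P).PosDef → X + s • P ∈ posDefDiagLeOne ι := fun s hs ↦
    ⟨hs, fun k ↦ by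
      simpa only [add_apply, smul_apply, hPdiag k, smul_zero, add_zero] using hX.2 k⟩
  have hev := hX.1.eventually_posDef_add_smul hP
  have hev' : ∀ᶠ s in 𝓝[>] (0 : ℝ), (X + s • P).PosDef ∧ (X + -s • P).PosDef :=
    nhdsWithin_le_nhds (hev.and ((continuous_neg.tendsto' 0 0 neg_zero).eventually hev))
  obtain ⟨s, ⟨hpos, hneg⟩, hs⟩ := (hev'.and self_mem_nhdsWithin).exists
  have h₁ := htr s ▸ hstat _ (hfeas s hpos)
  have h₂ := htr (-s) ▸ hstat _ (hfeas (-s) hneg)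
  nlinarith

theorem isMinOn_trace_mul_inv_iff {A X : Matrix ι ι ℝ} (hA : A.PosDef)
    (hX : X ∈ posDefDiagLeOne ι) :
    IsMinOn (fun Y ↦ (A * Y⁻¹).trace) (posDefDiagLeOne ι) X ↔
      (∀ i, X i i = 1) ∧ ∃ m : ι → ℝ, X⁻¹ * A * X⁻¹ = diagonal m := by
  have hM := hA.inv_mul_mul_inv hX.1
  constructor
  · intro hmin
    have hstat : ∀ Y ∈ posDefDiagLeOne ι, (X⁻¹ * A * X⁻¹ * (Y - X)).trace ≤ 0 := fun Y hY ↦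
      trace_inv_mul_mul_inv_mul_sub_nonpos_of_isMinOn hA.posSemidef convex_posDefDiagLeOne
        (fun _ hZ ↦ hZ.1) hX hY hmin
    refine ⟨diag_eq_one_of_forall_trace_mul_sub_nonpos (fun _ ↦ hM.diag_pos) hX hstat, _,
      (IsDiag.diagonal_diag fun i j hij ↦ ?_).symm⟩
    exact eq_zero_of_forall_trace_mul_sub_nonpos (isHermitian_iff_isSymm.1 hM.1) hX hstat hij
  · rintro ⟨hone, m, hm⟩
    refine isMinOn_iff.2 fun Y hY ↦ ?_
    have hm₀ : ∀ i, 0 ≤ m i := fun i ↦ by simpa [hm] using hM.diag_pos (i := i) |>.le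
    have hstat : (diagonal m * (Y - X)).trace ≤ 0 := by
      simp only [trace, diag_apply, diagonal_mul, sub_apply, hone]
      exact Finset.sum_nonpos fun i _ ↦ mul_nonpos_of_nonneg_of_nonpos (hm₀ i)
        (sub_nonpos.2 (hY.2 i))
    have h := trace_mul_inv_le_add hA.posSemidef hX.1 hY.1
    rw [hm] at h
    linarith

lemma diagonal_mul_diagonal_inv {w : ι → ℝ} (hw : ∀ i, w i ≠ 0) :
    diagonal w * diagonal (fun i ↦ (w i)⁻¹) = 1 := by
  simp [diagonal_mul_diagonal, hw]

lemma diagonal_inv_mul_diagonal {w : ι → ℝ} (hw : ∀ i, w i ≠ 0) :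
    diagonal (fun i ↦ (w i)⁻¹) * diagonal w = 1 := by
  simp [diagonal_mul_diagonal, hw]

lemma inv_mul_mul_inv_eq_diagonal_of_mul_self_eq {A R : Matrix ι ι ℝ} (hA : A.PosDef)
    {lam : ι → ℝ} (hlam : ∀ i, 0 < lam i)
    (hRR : R * R = diagonal (fun i ↦ √(lam i)) * A * diagonal (fun i ↦ √(lam i))) :
    (diagonal (fun i ↦ (√(lam i))⁻¹) * R * diagonal (fun i ↦ (√(lam i))⁻¹))⁻¹ * A *
      (diagonal (fun i ↦ (√(lam i))⁻¹) * R * diagonal (fun i ↦ (√(lam i))⁻¹))⁻¹ =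
        diagonal lam := by
  have hsqrt : ∀ i, √(lam i) ≠ 0 := fun i ↦ (Real.sqrt_pos.2 (hlam i)).ne'
  set D := diagonal fun i ↦ √(lam i)
  set D' := diagonal fun i ↦ (√(lam i))⁻¹
  have hD : IsUnit D := .of_mul_eq_one _ (diagonal_mul_diagonal_inv hsqrt)
  have hR : IsUnit R := isUnit_of_mul_isUnit_left (hRR ▸ (hD.mul hA.isUnit).mul hD)
  have hRdet := (isUnit_iff_isUnit_det R).1 hR
  have hinv : (D' * R * D')⁻¹ = D * R⁻¹ * D := by
    refine inv_eq_left_inv ?_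
    rw [show D * R⁻¹ * D * (D' * R * D') = D * R⁻¹ * (D * D') * R * D' by noncomm_ring,
      diagonal_mul_diagonal_inv hsqrt, Matrix.mul_one, Matrix.mul_assoc D,
      nonsing_inv_mul _ hRdet, Matrix.mul_one, diagonal_mul_diagonal_inv hsqrt]
  rw [hinv, show D * R⁻¹ * D * A * (D * R⁻¹ * D) = D * R⁻¹ * (D * A * D) * R⁻¹ * D by
      noncomm_ring, ← hRR, show D * R⁻¹ * (R * R) * R⁻¹ * D = D * (R⁻¹ * R) * (R * R⁻¹) * D by
      noncomm_ring, nonsing_inv_mul _ hRdet, mul_nonsing_inv _ hRdet]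
  simp [D, diagonal_mul_diagonal, Real.mul_self_sqrt (hlam _).le]

theorem diag_eq_one_and_exists_diagonal_iff {A X : Matrix ι ι ℝ} (hA : A.PosDef)
    (hX : X.PosDef) :
    ((∀ i, X i i = 1) ∧ ∃ m : ι → ℝ, X⁻¹ * A * X⁻¹ = diagonal m) ↔
      ∃ lam : ι → ℝ, (∀ i, 0 < lam i) ∧
        ∃ R : Matrix ι ι ℝ, R.PosSemidef ∧
          R * R = diagonal (fun i ↦ √(lam i)) * A * diagonal (fun i ↦ √(lam i)) ∧
          (∀ i, R i i = lam i) ∧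
          X = diagonal (fun i ↦ (√(lam i))⁻¹) * R * diagonal (fun i ↦ (√(lam i))⁻¹) := by
  constructor
  · rintro ⟨hone, m, hm⟩
    have hm₀ : ∀ i, 0 < m i := fun i ↦ by
      simpa [hm] using (hA.inv_mul_mul_inv hX).diag_pos (i := i)
    have hsqrt : ∀ i, √(m i) ≠ 0 := fun i ↦ (Real.sqrt_pos.2 (hm₀ i)).ne'
    set D := diagonal fun i ↦ √(m i)
    set D' := diagonal fun i ↦ (√(m i))⁻¹
    have hDD : D * D = diagonal m := by
      simp [D, diagonal_mul_diagonal, Real.mul_self_sqrt (hm₀ _).le]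
    have hXMX : X * diagonal m * X = A := by
      rw [← hm, show X * (X⁻¹ * A * X⁻¹) * X = X * X⁻¹ * A * (X⁻¹ * X) by noncomm_ring,
        mul_nonsing_inv _ hX.det_pos.ne'.isUnit, nonsing_inv_mul _ hX.det_pos.ne'.isUnit,
        Matrix.one_mul, Matrix.mul_one]
    refine ⟨m, hm₀, D * X * D, by simpa [D] using hX.posSemidef.conjTranspose_mul_mul_same D,
      ?_, fun i ↦ ?_, ?_⟩
    · rw [show D * X * D * (D * X * D) = D * (X * (D * D) * X) * D by noncomm_ring, hDD, hXMX]
    · simp [D, mul_diagonal, diagonal_mul, hone, Real.mul_self_sqrt (hm₀ i).le]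
    · rw [show D' * (D * X * D) * D' = D' * D * X * (D * D') by noncomm_ring,
        diagonal_inv_mul_diagonal hsqrt, diagonal_mul_diagonal_inv hsqrt, Matrix.one_mul,
        Matrix.mul_one]
  · rintro ⟨lam, hlam, R, -, hRR, hRdiag, rfl⟩
    refine ⟨fun i ↦ ?_, lam, inv_mul_mul_inv_eq_diagonal_of_mul_self_eq hA hlam hRR⟩
    simp only [mul_diagonal, diagonal_mul, hRdiag]
    rw [mul_right_comm, ← mul_inv, Real.mul_self_sqrt (hlam i).le, inv_mul_cancel₀ (hlam i).ne']

end DecidableEq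

end Matrix

theorem minimizer_iff_fixed_point_general (n : ℕ)
    (S : Matrix (Fin n) (Fin n) ℝ) (hS : IsUnit S.det)
    (X : Matrix (Fin n) (Fin n) ℝ) (hX : X.PosDef)
    (hdiag : ∀ i : Fin n, X i i ≤ 1) :
    (∀ Y : Matrix (Fin n) (Fin n) ℝ, Y.PosDef → (∀ i : Fin n, Y i i ≤ 1) →
        Matrix.trace (Sᵀ * S * X⁻¹) ≤ Matrix.trace (Sᵀ * S * Y⁻¹)) ↔
    (∃ lam : Fin n → ℝ, (∀ i, 0 < lam i) ∧
      ∃ R : Matrix (Fin n) (Fin n) ℝ, R.PosSemidef ∧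
        R * R = Matrix.diagonal (fun i => Real.sqrt (lam i)) * (Sᵀ * S) *
          Matrix.diagonal (fun i => Real.sqrt (lam i)) ∧
        (∀ i : Fin n, R i i = lam i) ∧
        X = Matrix.diagonal (fun i => (Real.sqrt (lam i))⁻¹) * R *
          Matrix.diagonal (fun i => (Real.sqrt (lam i))⁻¹)) := by
  have hA : (Sᵀ * S).PosDef := by
    simpa using PosDef.conjTranspose_mul_self S
      (mulVec_injective_iff_isUnit.2 ((isUnit_iff_isUnit_det S).2 hS))
  rw [← diag_eq_one_and_exists_diagonal_iff hA hX,
    ← isMinOn_trace_mul_inv_iff hA ⟨hX, hdiag⟩, isMinOn_iff]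
  simp only [posDefDiagLeOne, Set.mem_ofPred_eq, and_imp]

/-- Lemma `expressions_for_x`: a symmetric positive-definite `X` with diagonal
entries at most `1` minimizes `tr(SᵀS X⁻¹)` over all such matrices if and only
if there is a vector `λ` with strictly positive entries which is a fixed point
of `φ` (i.e. the diagonal of the PSD square root `R` of
`diag(λ)^{1/2}(SᵀS)diag(λ)^{1/2}` equals `λ`) and
`X = diag(λ)^{-1/2} R diag(λ)^{-1/2}`. -/
theorem minimizer_iff_fixed_point (n : ℕ) (hn : 1 ≤ n)
    (S : Matrix (Fin n) (Fin n) ℝ) (hS : IsUnit S.det)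
    (X : Matrix (Fin n) (Fin n) ℝ) (hX : X.PosDef)
    (hdiag : ∀ i : Fin n, X i i ≤ 1) :
    (∀ Y : Matrix (Fin n) (Fin n) ℝ, Y.PosDef → (∀ i : Fin n, Y i i ≤ 1) →
        Matrix.trace (Sᵀ * S * X⁻¹) ≤ Matrix.trace (Sᵀ * S * Y⁻¹)) ↔
    (∃ lam : Fin n → ℝ, (∀ i, 0 < lam i) ∧
      ∃ R : Matrix (Fin n) (Fin n) ℝ, R.PosSemidef ∧
        R * R = Matrix.diagonal (fun i => Real.sqrt (lam i)) * (Sᵀ * S) *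
          Matrix.diagonal (fun i => Real.sqrt (lam i)) ∧
        (∀ i : Fin n, R i i = lam i) ∧
        X = Matrix.diagonal (fun i => (Real.sqrt (lam i))⁻¹) * R *
          Matrix.diagonal (fun i => (Real.sqrt (lam i))⁻¹)) :=
  minimizer_iff_fixed_point_general n S hS X hX hdiag
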